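/- In the Homotopy Transfer Theorem for a dg algebra X along a deformation retract (i, p, h) with h satisfying the generalized Leibniz rule and h∘i = 0, every higher transferred operation vanishes: for each planar binary rooted tree with n ≥ 3 leaves, the associated composite (products in X interleaved with h, with i at the leaves and p at the root) is the zero map. In particular m_n^Y = 0 for all n ≥ 3. -/
import Mathlib


/-- Planar binary rooted trees. -/
inductive PBT : Type where
  | leaf : PBT
  | node : PBT → PBT → PBT

/-- The number of leaves of a planar binary rooted tree. -/
def PBT.leaves : PBT → ℕ
  | .leaf => 1
  | .node t1 t2 => t1.leaves + t2.leaves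

/-- The Homotopy Transfer Theorem composite attached to a planar binary
rooted tree (below the root): each leaf takes an input from Y and applies i,
each internal multiplication in X is followed by the homotopy h.  The
arguments `a : ℕ → Y` are consumed left to right starting at position `k`. -/
noncomputable def PBT.evh {R X Y : Type*} [CommRing R]
    [AddCommGroup X] [Module R X] [AddCommGroup Y] [Module R Y]
    (mul : X →ₗ[R] X →ₗ[R] X) (h : X →ₗ[R] X) (i : Y →ₗ[R] X)
    (a : ℕ → Y) : PBT → ℕ → X
  | .leaf, k => i (a k)
  | .node t1 t2, k =>
      h (mul (PBT.evh mul h i a t1 k) (PBT.evh mul h i a t2 (k + t1.leaves)))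

/-
Homotopy Transfer Theorem for dg algebras under the generalized Leibniz
hypothesis: for every planar binary rooted tree with n ≥ 3 leaves (i.e. with
root `node t1 t2` where t1.leaves + t2.leaves ≥ 3), the associated composite
(i at the leaves, products in X interleaved with h, and p at the root) is the
zero map.  In particular the transferred higher operations m_n^Y, which are
signed sums of such tree composites, vanish for all n ≥ 3.
-/
theorem HTT_higher_operations_vanish {R X Y : Type*} [CommRing R]
    [AddCommGroup X] [Module R X] [AddCommGroup Y] [Module R Y]
    -- gradings of the complexes X and Y
    (A : ℕ → Submodule R X) (B : ℕ → Submodule R Y)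
    [DirectSum.Decomposition A] [DirectSum.Decomposition B]
    -- the differentials
    (dX : X →ₗ[R] X) (dY : Y →ₗ[R] Y)
    (hdX2 : dX ∘ₗ dX = 0) (hdY2 : dY ∘ₗ dY = 0)
    (hdXdeg : ∀ n : ℕ, ∀ x ∈ A (n + 1), dX x ∈ A n)
    (hdX0 : ∀ x ∈ A 0, dX x = 0)
    (hdYdeg : ∀ n : ℕ, ∀ y ∈ B (n + 1), dY y ∈ B n)
    (hdY0 : ∀ y ∈ B 0, dY y = 0)
    -- the dg algebra structure on X : bilinear, unital, associative product
    -- compatible with the grading and satisfying the Leibniz rule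
    (mul : X →ₗ[R] X →ₗ[R] X) (one : X) (hone : one ∈ A 0)
    (hone_l : ∀ x, mul one x = x) (hone_r : ∀ x, mul x one = x)
    (hassoc : ∀ x y z : X, mul (mul x y) z = mul x (mul y z))
    (hmuldeg : ∀ m n : ℕ, ∀ x ∈ A m, ∀ y ∈ A n, mul x y ∈ A (m + n))
    (hLeib : ∀ m : ℕ, ∀ x ∈ A m, ∀ y : X,
      dX (mul x y) = mul (dX x) y + ((-1 : ℤ) ^ m) • mul x (dX y))
    -- the deformation retract (i, p, h)
    (i : Y →ₗ[R] X) (p : X →ₗ[R] Y) (h : X →ₗ[R] X)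
    (hichain : dX ∘ₗ i = i ∘ₗ dY) (hpchain : dY ∘ₗ p = p ∘ₗ dX)
    (hideg : ∀ n : ℕ, ∀ y ∈ B n, i y ∈ A n)
    (hpdeg : ∀ n : ℕ, ∀ x ∈ A n, p x ∈ B n)
    (hhdeg : ∀ n : ℕ, ∀ x ∈ A n, h x ∈ A (n + 1))
    (hpi : p ∘ₗ i = LinearMap.id)
    (hip : i ∘ₗ p = LinearMap.id + dX ∘ₗ h + h ∘ₗ dX)
    -- h satisfies the generalized Leibniz rule : h(ab) ∈ h(a)·X + X·h(b)
    (hgen : ∀ a b : X, ∃ u v : X, h (mul a b) = mul (h a) u + mul v (h b))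
    -- h ∘ i = 0
    (hhi : h ∘ₗ i = 0) :
    ∀ t1 t2 : PBT, 3 ≤ t1.leaves + t2.leaves → ∀ a : ℕ → Y,
      p (mul (PBT.evh mul h i a t1 0) (PBT.evh mul h i a t2 t1.leaves)) = 0 := by
  have key : ∀ (a : ℕ → Y) (t : PBT) (k : ℕ), t ≠ PBT.leaf →
      PBT.evh mul h i a t k = 0 := by
    intro a t
    induction t with
    | leaf => intro k hk; exact absurd rfl hk
    | node t1 t2 ih1 ih2 =>
      intro k _
      simp only [PBT.evh]
      cases t1 with
      | node s1 s2 =>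
        rw [ih1 k (by simp)]
        simp
      | leaf =>
        cases t2 with
        | node s1 s2 =>
          rw [ih2 (k + PBT.leaf.leaves) (by simp)]
          simp
        | leaf =>
          simp only [PBT.evh]
          obtain ⟨u, v, huv⟩ := hgen (i (a k)) (i (a (k + PBT.leaf.leaves)))
          rw [huv]
          have h0 : ∀ y : Y, h (i y) = 0 := fun y =>
            congrFun (congrArg DFunLike.coe hhi) y
          rw [h0, h0]
          simp
  intro t1 t2 hle a
  cases t1 with
  | node s1 s2 =>
    rw [key a (PBT.node s1 s2) 0 (by simp)]
    simp
  | leaf =>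
    cases t2 with
    | node s1 s2 =>
      rw [key a (PBT.node s1 s2) PBT.leaf.leaves (by simp)]
      simp
    | leaf => simp [PBT.leaves] at hle
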